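/- Let n ≥ 10 and α ≥ 5 be integers with 2α ≥ n−1 and α ≤ n−3, and set f(x) = x⁴ − (α+3)x² − 4x + (2α−n+1), f₄(x) = x⁷ − (α+5)x⁵ − 4x⁴ − (n−6α−3)x³ + 2(α+1)x² + (4n−8α−9)x + 2(n−2α−2). If ρ is a real number with ρ > 1, ρ² > α, and f₄(ρ) = 0, then f(ρ) < 0. -/

import Mathlib

/-!
Multiplying `f₄` by `x` and subtracting `(x² - 1)² f(x)` cancels every power of `x` above the
fourth. Grouped as `x² ((2α-5)x² + 2n-3α-4) + 2x ((α-3)x² + n-2α) + (n-2α-1)`, the remaining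
quartic exceeds `4α² - 20α + 5n - 5 > 0` once `x² > α` and `x > 1`, while at a root of `f₄` it
equals `-(x² - 1)² f(x)`.
-/

def polyF (n α x : ℝ) : ℝ :=
  x ^ 4 - (α + 3) * x ^ 2 - 4 * x + (2 * α - n + 1)

def polyF₄ (n α x : ℝ) : ℝ :=
  x ^ 7 - (α + 5) * x ^ 5 - 4 * x ^ 4 - (n - 6 * α - 3) * x ^ 3 + 2 * (α + 1) * x ^ 2
    + (4 * n - 8 * α - 9) * x + 2 * (n - 2 * α - 2)

theorem mul_polyF₄_sub_mul_polyF (n α x : ℝ) :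
    x * polyF₄ n α x - (x ^ 2 - 1) ^ 2 * polyF n α x
      = (2 * α - 5) * x ^ 4 + 2 * (α - 3) * x ^ 3 + (2 * n - 3 * α - 4) * x ^ 2
        + 2 * (n - 2 * α) * x + (n - 2 * α - 1) := by
  unfold polyF polyF₄
  ring

theorem quartic_remainder_pos {n α x : ℝ} (hn : 1 < n) (hα : 5 ≤ α) (hx : 1 < x)
    (hx2 : α < x ^ 2) :
    0 < (2 * α - 5) * x ^ 4 + 2 * (α - 3) * x ^ 3 + (2 * n - 3 * α - 4) * x ^ 2
        + 2 * (n - 2 * α) * x + (n - 2 * α - 1) := by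
  have hgap : 0 < x ^ 2 - α := sub_pos.mpr hx2
  have hB₁ : 2 * (α ^ 2 - 4 * α + n - 2) < (2 * α - 5) * x ^ 2 + 2 * n - 3 * α - 4 := by
    nlinarith [mul_pos (by linarith : (0 : ℝ) < 2 * α - 5) hgap]
  have hB₂ : α ^ 2 - 5 * α + n < (α - 3) * x ^ 2 + n - 2 * α := by
    nlinarith [mul_pos (by linarith : (0 : ℝ) < α - 3) hgap]
  have hb₁ : 0 < α ^ 2 - 4 * α + n - 2 := by nlinarith
  have hb₂ : 0 < α ^ 2 - 5 * α + n := by nlinarith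
  have hx2' : 1 < x ^ 2 := by nlinarith
  have hB₁pos : 0 < (2 * α - 5) * x ^ 2 + 2 * n - 3 * α - 4 := by linarith
  have hquad :
      2 * (α ^ 2 - 4 * α + n - 2) < x ^ 2 * ((2 * α - 5) * x ^ 2 + 2 * n - 3 * α - 4) := by
    nlinarith [mul_lt_mul_of_pos_right hx2' hB₁pos]
  have hlin : α ^ 2 - 5 * α + n < x * ((α - 3) * x ^ 2 + n - 2 * α) := by
    nlinarith [mul_lt_mul_of_pos_right hx (hb₂.trans hB₂)]
  nlinarith

theorem polyF_neg_of_polyF₄_eq_zero {n α x : ℝ} (hn : 1 < n) (hα : 5 ≤ α) (hx : 1 < x)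
    (hx2 : α < x ^ 2) (hroot : polyF₄ n α x = 0) : polyF n α x < 0 := by
  have hsq : 0 < (x ^ 2 - 1) ^ 2 := pow_pos (by nlinarith) 2
  have hid := mul_polyF₄_sub_mul_polyF n α x
  rw [hroot, mul_zero, zero_sub] at hid
  have hneg : (x ^ 2 - 1) ^ 2 * polyF n α x < 0 := by
    linarith [quartic_remainder_pos hn hα hx hx2]
  exact neg_of_mul_neg_right hneg hsq.le

theorem f_neg_at_root_of_f4_general (n α : ℤ) (hn : 10 ≤ n) (hα : 5 ≤ α)
    (ρ : ℝ) (hρ : 1 < ρ) (hρ2 : (α : ℝ) < ρ^2)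
    (hroot : ρ^7 - ((α : ℝ) + 5)*ρ^5 - 4*ρ^4 - ((n : ℝ) - 6*(α : ℝ) - 3)*ρ^3
        + 2*((α : ℝ) + 1)*ρ^2 + (4*(n : ℝ) - 8*(α : ℝ) - 9)*ρ + 2*((n : ℝ) - 2*(α : ℝ) - 2) = 0) :
    ρ^4 - ((α : ℝ) + 3)*ρ^2 - 4*ρ + (2*(α : ℝ) - (n : ℝ) + 1) < 0 := by
  have hn' : (1 : ℝ) < n := by exact_mod_cast (by omega : 1 < n)
  have hα' : (5 : ℝ) ≤ α := by exact_mod_cast hα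
  exact polyF_neg_of_polyF₄_eq_zero hn' hα' hρ hρ2 hroot

/-- If `ρ > 1`, `ρ² > α` and `f₄(ρ) = 0`, then `f(ρ) < 0`. -/
theorem f_neg_at_root_of_f4 (n α : ℤ) (hn : 10 ≤ n) (hα : 5 ≤ α)
    (h1 : n - 1 ≤ 2 * α) (h2 : α ≤ n - 3) (ρ : ℝ) (hρ : 1 < ρ) (hρ2 : (α : ℝ) < ρ^2)
    (hroot : ρ^7 - ((α : ℝ) + 5)*ρ^5 - 4*ρ^4 - ((n : ℝ) - 6*(α : ℝ) - 3)*ρ^3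
        + 2*((α : ℝ) + 1)*ρ^2 + (4*(n : ℝ) - 8*(α : ℝ) - 9)*ρ + 2*((n : ℝ) - 2*(α : ℝ) - 2) = 0) :
    ρ^4 - ((α : ℝ) + 3)*ρ^2 - 4*ρ + (2*(α : ℝ) - (n : ℝ) + 1) < 0 :=
  f_neg_at_root_of_f4_general n α hn hα ρ hρ hρ2 hroot
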